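/- arXiv:2206.04428 — 3 statements merged into one kernel-verified Lean document; each statement's English description precedes it below -/
import Mathlib

section
/- Let η > 0, Ψ > 0, a > 0 and c > 0. The function γ_D(ρ) = η ρ (1−ρ) Ψ a c / (η ρ c + (1−ρ)) is strictly concave on the open interval (0,1). -/
/-!
Up to the positive factor `ηΨac`, `γ_D(ρ)` is `ρ(1-ρ)/(pρ + q(1-ρ))` with `p = ηc` and `q = 1`.
For `p, q > 0` the denominator is positive on `(0,1)` and this function has second derivative
`-2pq/(pρ + q(1-ρ))³ < 0`.
-/

open Set

theorem StrictConcaveOn.smul {𝕜 E β : Type*} [CommSemiring 𝕜] [PartialOrder 𝕜] [AddCommMonoid E]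
    [SMul 𝕜 E] [AddCommMonoid β] [PartialOrder β] [Module 𝕜 β] [PosSMulStrictMono 𝕜 β]
    {s : Set E} {f : E → β} {c : 𝕜} (hc : 0 < c) (hf : StrictConcaveOn 𝕜 s f) :
    StrictConcaveOn 𝕜 s fun x => c • f x :=
  ⟨hf.1, fun x hx y hy hxy a b ha hb hab =>
    calc
      a • c • f x + b • c • f y = c • (a • f x + b • f y) := by
        rw [smul_add, smul_comm c, smul_comm c]
      _ < c • f (a • x + b • y) := smul_lt_smul_of_pos_left (hf.2 hx hy hxy ha hb hab) hc⟩

theorem strictConcaveOn_of_hasDerivAt2_neg {D : Set ℝ} (hD : Convex ℝ D) (hD' : IsOpen D)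
    {f f' f'' : ℝ → ℝ} (hf' : ∀ x ∈ D, HasDerivAt f (f' x) x)
    (hf'' : ∀ x ∈ D, HasDerivAt f' (f'' x) x) (hf''₀ : ∀ x ∈ D, f'' x < 0) :
    StrictConcaveOn ℝ D f := by
  have hanti : StrictAntiOn f' D :=
    strictAntiOn_of_hasDerivWithinAt_neg hD
      (fun x hx => (hf'' x hx).continuousAt.continuousWithinAt)
      (by rw [hD'.interior_eq]; exact fun x hx => (hf'' x hx).hasDerivWithinAt)
      (by rwa [hD'.interior_eq])
  refine StrictAntiOn.strictConcaveOn_of_deriv hD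
    (fun x hx => (hf' x hx).continuousAt.continuousWithinAt) ?_
  rw [hD'.interior_eq]
  exact hanti.congr fun x hx => (hf' x hx).deriv.symm

theorem hasDerivAt_mul_add_mul_one_sub (p q x : ℝ) :
    HasDerivAt (fun ρ => p * ρ + q * (1 - ρ)) (p - q) x := by
  refine (((hasDerivAt_id x).const_mul p).fun_add
    (((hasDerivAt_id x).const_sub 1).const_mul q)).congr_deriv ?_
  ring

theorem hasDerivAt_mul_one_sub_div (p q x : ℝ) (hx : p * x + q * (1 - x) ≠ 0) :
    HasDerivAt (fun ρ => ρ * (1 - ρ) / (p * ρ + q * (1 - ρ)))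
      ((q - 2 * q * x - (p - q) * x ^ 2) / (p * x + q * (1 - x)) ^ 2) x := by
  have hnum : HasDerivAt (fun ρ : ℝ => ρ * (1 - ρ)) (1 * (1 - x) + x * (-1)) x :=
    (hasDerivAt_id x).mul ((hasDerivAt_id x).const_sub 1)
  exact (hnum.fun_div (hasDerivAt_mul_add_mul_one_sub p q x) hx).congr_deriv (by ring)

theorem hasDerivAt_deriv_mul_one_sub_div (p q x : ℝ) (hx : p * x + q * (1 - x) ≠ 0) :
    HasDerivAt (fun ρ => (q - 2 * q * ρ - (p - q) * ρ ^ 2) / (p * ρ + q * (1 - ρ)) ^ 2)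
      (-2 * p * q / (p * x + q * (1 - x)) ^ 3) x := by
  have hnum : HasDerivAt (fun ρ : ℝ => q - 2 * q * ρ - (p - q) * ρ ^ 2)
      (-(2 * q * 1) - (p - q) * (↑2 * x ^ (2 - 1))) x :=
    (((hasDerivAt_id x).const_mul (2 * q)).const_sub q).sub
      ((hasDerivAt_pow 2 x).const_mul (p - q))
  refine (hnum.fun_div ((hasDerivAt_mul_add_mul_one_sub p q x).fun_pow 2)
    (pow_ne_zero 2 hx)).congr_deriv ?_
  field_simp
  ring

theorem strictConcaveOn_mul_one_sub_div {p q : ℝ} (hp : 0 < p) (hq : 0 < q) :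
    StrictConcaveOn ℝ (Ioo 0 1) (fun ρ => ρ * (1 - ρ) / (p * ρ + q * (1 - ρ))) := by
  have hden : ∀ x ∈ Ioo (0 : ℝ) 1, 0 < p * x + q * (1 - x) := fun x ⟨hx₀, hx₁⟩ => by
    have := sub_pos.2 hx₁
    positivity
  exact strictConcaveOn_of_hasDerivAt2_neg (convex_Ioo 0 1) isOpen_Ioo
    (fun x hx => hasDerivAt_mul_one_sub_div p q x (hden x hx).ne')
    (fun x hx => hasDerivAt_deriv_mul_one_sub_div p q x (hden x hx).ne')
    (fun x hx => div_neg_of_neg_of_pos (by nlinarith [mul_pos hp hq]) (pow_pos (hden x hx) 3))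

/-- The end-to-end SNR `γ_D(ρ) = ηρ(1-ρ)Ψac/(ηρc + (1-ρ))` is strictly concave on `(0,1)`. -/
theorem statement_4 (η Ψ a c : ℝ) (hη : 0 < η) (hΨ : 0 < Ψ) (ha : 0 < a) (hc : 0 < c) :
    StrictConcaveOn ℝ (Set.Ioo (0 : ℝ) 1)
      (fun ρ => η * ρ * (1 - ρ) * Ψ * a * c / (η * ρ * c + (1 - ρ))) := by
  have hK : 0 < η * Ψ * a * c := by positivity
  refine ((strictConcaveOn_mul_one_sub_div (mul_pos hη hc) one_pos).smul hK).congr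
    fun ρ _ => ?_
  simp only [smul_eq_mul]
  ring
end

section
/- Let η > 0, Ψ > 0, a > 0 and c > 0, and define γ_D(ρ) = η ρ (1−ρ) Ψ a c / (η ρ c + (1−ρ)) for ρ ∈ (0,1). Then ρ* := 1/(1 + √(ηc)) lies in (0,1) and maximizes γ_D over (0,1): for every ρ ∈ (0,1), γ_D(ρ) ≤ γ_D(ρ*). -/
/-! With `s = √(ηc)` the SNR factors as `ηΨac · ρ(1-ρ)/(s²ρ + 1 - ρ)`. Writing `x = ρ`, `y = 1 - ρ`,
the bound `xy(1+s)² ≤ (s²x + y)(x + y)` is the identity `(s²x + y)(x + y) - xy(1+s)² = (sx - y)²`,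
so the normalized SNR never exceeds `1/(1+s)²`, and this value is attained exactly where `sx = y`,
i.e. at `ρ = 1/(1+s)`. -/

open Set

lemma mul_mul_one_add_sq_le (s x y : ℝ) : x * y * (1 + s) ^ 2 ≤ (s ^ 2 * x + y) * (x + y) := by
  nlinarith [sq_nonneg (s * x - y)]

lemma one_div_one_add_mem_Ioo {s : ℝ} (hs : 0 < s) : 1 / (1 + s) ∈ Ioo (0 : ℝ) 1 :=
  ⟨by positivity, (div_lt_one (by positivity)).2 (by linarith)⟩

noncomputable def normalizedSNR (s ρ : ℝ) : ℝ := ρ * (1 - ρ) / (s ^ 2 * ρ + (1 - ρ))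

lemma normalizedSNR_le {s ρ : ℝ} (hs : 0 ≤ s) (hρ : ρ ∈ Ioo (0 : ℝ) 1) :
    normalizedSNR s ρ ≤ 1 / (1 + s) ^ 2 := by
  obtain ⟨hρ₀, hρ₁⟩ := hρ
  have hden : 0 < s ^ 2 * ρ + (1 - ρ) := by positivity
  rw [normalizedSNR, div_le_div_iff₀ hden (by positivity)]
  simpa using mul_mul_one_add_sq_le s ρ (1 - ρ)

lemma normalizedSNR_one_div_one_add {s : ℝ} (hs : 0 < s) :
    normalizedSNR s (1 / (1 + s)) = 1 / (1 + s) ^ 2 := by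
  have : 1 + s ≠ 0 := by positivity
  have hden : s ^ 2 * (1 / (1 + s)) + (1 - 1 / (1 + s)) = s := by
    field_simp
    ring
  rw [normalizedSNR, hden]
  field_simp
  ring

/-- `ρ* = 1/(1 + √(ηc))` lies in `(0,1)` and maximizes
`γ_D(ρ) = ηρ(1-ρ)Ψac/(ηρc + (1-ρ))` over `(0,1)`. -/
theorem statement_5 (η Ψ a c : ℝ) (hη : 0 < η) (hΨ : 0 < Ψ) (ha : 0 < a) (hc : 0 < c) :
    1 / (1 + Real.sqrt (η * c)) ∈ Set.Ioo (0 : ℝ) 1 ∧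
    ∀ ρ ∈ Set.Ioo (0 : ℝ) 1,
      η * ρ * (1 - ρ) * Ψ * a * c / (η * ρ * c + (1 - ρ)) ≤
        η * (1 / (1 + Real.sqrt (η * c))) * (1 - 1 / (1 + Real.sqrt (η * c))) * Ψ * a * c /
          (η * (1 / (1 + Real.sqrt (η * c))) * c + (1 - 1 / (1 + Real.sqrt (η * c)))) := by
  set s := Real.sqrt (η * c)
  have hs : 0 < s := Real.sqrt_pos.2 (by positivity)
  have hs2 : s ^ 2 = η * c := Real.sq_sqrt (by positivity)
  have hSNR (ρ : ℝ) : η * ρ * (1 - ρ) * Ψ * a * c / (η * ρ * c + (1 - ρ)) =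
      η * Ψ * a * c * normalizedSNR s ρ := by
    rw [normalizedSNR, hs2]
    ring
  refine ⟨one_div_one_add_mem_Ioo hs, fun ρ hρ => ?_⟩
  rw [hSNR, hSNR, normalizedSNR_one_div_one_add hs]
  exact mul_le_mul_of_nonneg_left (normalizedSNR_le hs.le hρ) (by positivity)
end

section
/- Let M ≥ 1, λ_SR > 0, λ_RD > 0, η > 0, Ψ > 0, γ_th > 0 and ρ ∈ (0,1). Let X be the maximum of M i.i.d. exponential(λ_SR) random variables and let Y be exponential(λ_RD), independent of X. Then P( η ρ (1−ρ) Ψ X Y / (η ρ Y + (1−ρ)) < γ_th ) = 1 + Σ_{b=1}^{M} (−1)^b C(M,b) exp(−b λ_SR γ_th/((1−ρ)Ψ)) · λ_RD ∫₀^∞ exp(−b λ_SR γ_th/(η ρ Ψ x) − λ_RD x) dx. -/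
open MeasureTheory ProbabilityTheory Real Finset

/-!
By independence, the joint law of the gains `((X m)_m, Y)` is `(Exp λ_SR)^⊗M ⊗ Exp λ_RD`.
For `y > 0` the outage event `γ_D < γ_th` is `max_m X m < T y` with
`T y = γ_th/((1-ρ)Ψ) + γ_th/(ηρΨy)`, so conditioning on `Y` gives
`OP = E[(1 - exp(-λ_SR T Y))^M]`. Expanding the power binomially, the term of index `b`
factors as `exp(-bλ_SR γ_th/((1-ρ)Ψ))` times an integral against the density of `Y`.
-/

section ExponentialLaw

variable {r : ℝ}

lemma expMeasure_Iio (hr : 0 < r) (t : ℝ) :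
    expMeasure r (Set.Iio t) = ENNReal.ofReal (1 - exp (-(r * t))) := by
  have := isProbabilityMeasure_expMeasure hr
  have hac : expMeasure r ≪ volume := withDensity_absolutelyContinuous _ _
  rw [measure_congr (hac.ae_eq Iio_ae_eq_Iic), ← ofReal_cdf, cdf_expMeasure_eq hr]
  split_ifs with ht
  · rfl
  · rw [ENNReal.ofReal_zero, eq_comm, ENNReal.ofReal_eq_zero, sub_nonpos, one_le_exp_iff]
    nlinarith

lemma ae_pos_expMeasure (hr : 0 < r) : ∀ᵐ y ∂(expMeasure r), 0 < y := by
  have := isProbabilityMeasure_expMeasure hr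
  rw [ae_iff, show {y : ℝ | ¬ 0 < y} = Set.Iic 0 by ext; simp, ← ofReal_cdf,
    cdf_expMeasure_eq hr]
  simp

lemma integral_expMeasure (hr : 0 < r) (g : ℝ → ℝ) :
    ∫ y, g y ∂(expMeasure r) = r * ∫ y in Set.Ioi 0, g y * exp (-(r * y)) := by
  rw [show expMeasure r = volume.withDensity (exponentialPDF r) from rfl,
    integral_withDensity_eq_integral_toReal_smul (f := exponentialPDF r)
      (measurable_exponentialPDFReal r).ennreal_ofReal (ae_of_all _ fun _ => ENNReal.ofReal_lt_top),
    ← integral_const_mul,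
    ← integral_Ici_eq_integral_Ioi, ← setIntegral_eq_integral_of_forall_compl_eq_zero]
  · refine setIntegral_congr_fun measurableSet_Ici fun y (hy : 0 ≤ y) => ?_
    simp [exponentialPDF_of_nonneg hy, (mul_pos hr (exp_pos _)).le]
    ring
  · intro y (hy : ¬ 0 ≤ y)
    simp [exponentialPDF_of_neg (not_le.mp hy)]

lemma pi_expMeasure_iSup_lt {ι : Type*} [Fintype ι] [Nonempty ι] {t : ℝ} (hr : 0 < r)
    (ht : 0 ≤ t) :
    Measure.pi (fun _ : ι => expMeasure r) {x | ⨆ i, x i < t} =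
      ENNReal.ofReal ((1 - exp (-(r * t))) ^ Fintype.card ι) := by
  have := isProbabilityMeasure_expMeasure hr
  have : {x : ι → ℝ | ⨆ i, x i < t} = Set.univ.pi fun _ => Set.Iio t := by
    ext x
    simp [← sup'_univ_eq_ciSup, sup'_lt_iff]
  have hcdf : 0 ≤ 1 - exp (-(r * t)) := by
    rw [sub_nonneg, exp_le_one_iff, neg_nonpos]
    positivity
  rw [this, Measure.pi_pi, prod_const, expMeasure_Iio hr, ENNReal.ofReal_pow hcdf, card_univ]

end ExponentialLaw

namespace ProbabilityTheory

lemma iIndepFun.map_pi_prod_eq {Ω ι β : Type*} [MeasurableSpace Ω] [MeasurableSpace β]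
    [Fintype ι]
    {P : Measure Ω} [IsProbabilityMeasure P] {X : ι → Ω → β} {Y : Ω → β}
    (hX : ∀ i, Measurable (X i)) (hY : Measurable Y)
    (h : iIndepFun (Sum.elim X fun _ : Unit => Y) P) :
    P.map (fun ω => (fun i => X i ω, Y ω)) =
      (Measure.pi fun i => P.map (X i)).prod (P.map Y) := by
  have hZ : ∀ j, Measurable (Sum.elim X (fun _ : Unit => Y) j) := by
    rintro (i | u)
    exacts [hX i, hY]
  have hsplit :=
    (MeasurePreserving.id _ |>.prod (measurePreserving_piUnique fun _ : Unit => P.map Y)).comp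
      (measurePreserving_sumPiEquivProdPi fun j => P.map (Sum.elim X (fun _ => Y) j))
  rw [← h.map_fun_eq_pi_map fun j => (hZ j).aemeasurable] at hsplit
  have hmap := hsplit.map_eq
  rw [Measure.map_map hsplit.measurable (measurable_pi_lambda _ hZ)] at hmap
  exact hmap

end ProbabilityTheory

lemma integral_one_sub_exp_neg_pow {α : Type*} [MeasurableSpace α] {ν : Measure α}
    [IsProbabilityMeasure ν] {f : α → ℝ} (hf : Measurable f) (hf0 : ∀ᵐ a ∂ν, 0 ≤ f a)
    (n : ℕ) :
    ∫ a, (1 - exp (-f a)) ^ n ∂ν =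
      1 + ∑ b ∈ Icc 1 n, (-1) ^ b * (n.choose b : ℝ) * ∫ a, exp (-(b * f a)) ∂ν := by
  have hexpand : ∀ a, (1 - exp (-f a)) ^ n =
      ∑ b ∈ range (n + 1), (-1) ^ b * (n.choose b : ℝ) * exp (-(b * f a)) := by
    intro a
    rw [sub_eq_neg_add, add_pow]
    refine sum_congr rfl fun b _ => ?_
    rw [neg_pow, ← exp_nat_mul]
    ring_nf
  have hint : ∀ b : ℕ, Integrable (fun a => exp (-(b * f a))) ν := by
    intro b
    refine Integrable.of_bound (by fun_prop) 1 ?_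
    filter_upwards [hf0] with a ha
    rw [norm_of_nonneg (exp_pos _).le, exp_le_one_iff]
    exact neg_nonpos.mpr (mul_nonneg b.cast_nonneg ha)
  simp_rw [hexpand]
  rw [integral_finsetSum _ fun b _ => (hint b).const_mul _, range_eq_Ico,
    sum_eq_sum_Ico_succ_bot n.succ_pos, zero_add, Nat.succ_eq_add_one, Ico_add_one_right_eq_Icc]
  simp [integral_const_mul]

/-- The end-to-end SNR `γ_D` at source-to-relay gain `x` and relay-to-destination gain `y`. -/
noncomputable def snrAF (η ρ Ψ x y : ℝ) : ℝ :=
  η * ρ * (1 - ρ) * Ψ * x * y / (η * ρ * y + (1 - ρ))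

noncomputable def outageThreshold (η ρ Ψ γth y : ℝ) : ℝ :=
  γth / ((1 - ρ) * Ψ) + γth / (η * ρ * Ψ * y)

section Outage

variable {η ρ Ψ γth : ℝ}

lemma snrAF_lt_iff (hη : 0 < η) (hρ : ρ ∈ Set.Ioo (0 : ℝ) 1) (hΨ : 0 < Ψ) {x y : ℝ}
    (hy : 0 < y) :
    snrAF η ρ Ψ x y < γth ↔ x < outageThreshold η ρ Ψ γth y := by
  obtain ⟨hρ0, hρ1⟩ := hρ
  have h1ρ : 0 < 1 - ρ := sub_pos.mpr hρ1
  have hk : 0 < η * ρ * (1 - ρ) * Ψ * y := by positivity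
  have hT : γth * (η * ρ * y + (1 - ρ)) =
      η * ρ * (1 - ρ) * Ψ * y * outageThreshold η ρ Ψ γth y := by
    unfold outageThreshold
    field_simp
  rw [snrAF, div_lt_iff₀ (by positivity), hT,
    show η * ρ * (1 - ρ) * Ψ * x * y = η * ρ * (1 - ρ) * Ψ * y * x by ring]
  exact mul_lt_mul_iff_right₀ hk

lemma measurableSet_setOf_snrAF_iSup_lt {ι : Type*} [Fintype ι] :
    MeasurableSet {p : (ι → ℝ) × ℝ | snrAF η ρ Ψ (⨆ i, p.1 i) p.2 < γth} := by
  have hmax : Measurable fun p : (ι → ℝ) × ℝ => ⨆ i, p.1 i :=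
    .iSup fun i => (measurable_pi_apply i).comp measurable_fst
  exact measurableSet_lt (by unfold snrAF; fun_prop) measurable_const

@[fun_prop]
lemma measurable_outageThreshold : Measurable (outageThreshold η ρ Ψ γth) := by
  unfold outageThreshold
  fun_prop

lemma outageThreshold_nonneg (hη : 0 < η) (hρ : ρ ∈ Set.Ioo (0 : ℝ) 1) (hΨ : 0 < Ψ)
    (hγ : 0 ≤ γth) {y : ℝ} (hy : 0 < y) : 0 ≤ outageThreshold η ρ Ψ γth y := by
  have h1ρ : 0 < 1 - ρ := sub_pos.mpr hρ.2
  have hρ0 := hρ.1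
  unfold outageThreshold
  positivity

lemma integral_exp_neg_outageThreshold {lamSR lamRD : ℝ} (hRD : 0 < lamRD) (b : ℕ) :
    ∫ y, exp (-(b * (lamSR * outageThreshold η ρ Ψ γth y))) ∂(expMeasure lamRD) =
      exp (-(b : ℝ) * lamSR * γth / ((1 - ρ) * Ψ)) *
        (lamRD * ∫ x in Set.Ioi (0 : ℝ),
          exp (-(b : ℝ) * lamSR * γth / (η * ρ * Ψ * x) - lamRD * x)) := by
  have hsplit : ∀ y, exp (-(b * (lamSR * outageThreshold η ρ Ψ γth y))) * exp (-(lamRD * y)) =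
      exp (-(b : ℝ) * lamSR * γth / ((1 - ρ) * Ψ)) *
        exp (-(b : ℝ) * lamSR * γth / (η * ρ * Ψ * y) - lamRD * y) := by
    intro y
    rw [← exp_add, ← exp_add, outageThreshold]
    ring_nf
  simp_rw [integral_expMeasure hRD, hsplit, integral_const_mul]
  ring

end Outage

/-- Theorem 1 of the paper (exact integral form, Appendix A, eq. (23)): outage probability of
the SPSR scheme. `X` is the maximum of `M` i.i.d. exponential(λ_SR) source-to-relay gains and
`Y` is the (independent) exponential(λ_RD) relay-to-destination gain. -/
theorem statement_7 {Ω : Type*} [MeasurableSpace Ω] (P : Measure Ω) [IsProbabilityMeasure P]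
    (M : ℕ) (hM : 1 ≤ M) (lamSR lamRD η Ψ γth ρ : ℝ)
    (hSR : 0 < lamSR) (hRD : 0 < lamRD) (hη : 0 < η) (hΨ : 0 < Ψ) (hγ : 0 < γth)
    (hρ : ρ ∈ Set.Ioo (0 : ℝ) 1)
    (X : Fin M → Ω → ℝ) (Y : Ω → ℝ)
    (hmeasX : ∀ m, Measurable (X m)) (hmeasY : Measurable Y)
    (hindep : iIndepFun (Sum.elim X fun _ : Unit => Y) P)
    (hlawX : ∀ m, P.map (X m) = expMeasure lamSR)
    (hlawY : P.map Y = expMeasure lamRD) :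
    (P {ω | η * ρ * (1 - ρ) * Ψ * (⨆ m, X m ω) * Y ω / (η * ρ * Y ω + (1 - ρ)) < γth}).toReal =
      1 + ∑ b ∈ Finset.Icc 1 M, (-1 : ℝ) ^ b * (M.choose b : ℝ) *
        Real.exp (-(b : ℝ) * lamSR * γth / ((1 - ρ) * Ψ)) *
        (lamRD * ∫ x in Set.Ioi (0 : ℝ),
          Real.exp (-(b : ℝ) * lamSR * γth / (η * ρ * Ψ * x) - lamRD * x)) := by
  have : Nonempty (Fin M) := ⟨⟨0, hM⟩⟩
  have := isProbabilityMeasure_expMeasure hSR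
  have := isProbabilityMeasure_expMeasure hRD
  let S := {p : (Fin M → ℝ) × ℝ | snrAF η ρ Ψ (⨆ m, p.1 m) p.2 < γth}
  have hS : MeasurableSet S := measurableSet_setOf_snrAF_iSup_lt
  have hjoint := hindep.map_pi_prod_eq hmeasX hmeasY
  simp only [hlawX, hlawY] at hjoint
  have hprob : P ((fun ω => (fun m => X m ω, Y ω)) ⁻¹' S) =
      ∫⁻ y, ENNReal.ofReal ((1 - exp (-(lamSR * outageThreshold η ρ Ψ γth y))) ^ M)
        ∂(expMeasure lamRD) := by
    rw [← Measure.map_apply (by fun_prop) hS, hjoint, Measure.prod_apply_symm hS]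
    refine lintegral_congr_ae ?_
    filter_upwards [ae_pos_expMeasure hRD] with y hy
    simp only [S, Set.preimage_ofPred_eq, snrAF_lt_iff hη hρ hΨ hy]
    rw [pi_expMeasure_iSup_lt hSR (outageThreshold_nonneg hη hρ hΨ hγ.le hy), Fintype.card_fin]
  have hnonneg : ∀ᵐ y ∂(expMeasure lamRD), 0 ≤ lamSR * outageThreshold η ρ Ψ γth y := by
    filter_upwards [ae_pos_expMeasure hRD] with y hy
    exact mul_nonneg hSR.le (outageThreshold_nonneg hη hρ hΨ hγ.le hy)
  change (P ((fun ω => (fun m => X m ω, Y ω)) ⁻¹' S)).toReal = _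
  rw [hprob, ← integral_eq_lintegral_of_nonneg_ae _ (by fun_prop),
    integral_one_sub_exp_neg_pow (by fun_prop) hnonneg]
  · simp only [integral_exp_neg_outageThreshold hRD, mul_assoc]
  · filter_upwards [hnonneg] with y hy
    exact pow_nonneg (sub_nonneg.mpr (exp_le_one_iff.mpr (neg_nonpos.mpr hy))) M
end
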